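/- Telescoping consequence of the BA identity: if F_μ(P_{Z|XT}, Q_{Z|X}) ≤ F_μ(P^{(k+1)}, Q^{(k)}) for all k (with Q_{Z|X} = Q(P_{Z|XT})), then for all N > M ≥ 1, 0 ≤ Σ_{k=M}^{N−1} [F_μ(P^{(k+1)}, Q^{(k)}) − F_μ(P_{Z|XT}, Q_{Z|X})] ≤ D(Q_{Z|X} ∥ Q^{(M)} | P_X) − D(Q_{Z|X} ∥ Q^{(N)} | P_X); hence the series Σ_k [F_μ(P^{(k+1)}, Q^{(k)}) − F_μ(P_{Z|XT}, Q_{Z|X})] converges and F_μ(P^{(k+1)}, Q^{(k)}) → F_μ(P_{Z|XT}, Q_{Z|X}). -/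

import Mathlib

open Finset Filter

/-- Joint law of (X,T): `P_{XT}(x,t) = P_X(x) ∑_s P_S(s) P_{T|XS}(t|x,s)`. -/
noncomputable def pXT {X S T : Type} [Fintype S]
    (pX : X → ℝ) (pS : S → ℝ) (pTXS : X → S → T → ℝ) (x : X) (t : T) : ℝ :=
  pX x * ∑ s, pS s * pTXS x s t

/-- `F_μ(P_{Z|XT}, Q_{Z|X}) = D(P_{Z|XT} ∥ Q_{Z|X} | P_{XT}) − μ E[d(S,Z)]`. -/
noncomputable def Fmu {X S T Z : Type} [Fintype X] [Fintype S] [Fintype T] [Fintype Z]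
    (μ : ℝ) (pX : X → ℝ) (pS : S → ℝ) (pTXS : X → S → T → ℝ) (d : S → Z → ℝ)
    (P : X → T → Z → ℝ) (Q : X → Z → ℝ) : ℝ :=
  (∑ x, ∑ t, pXT pX pS pTXS x t * ∑ z, P x t z * Real.log (P x t z / Q x z))
    - μ * ∑ x, ∑ s, ∑ t, ∑ z, pX x * pS s * pTXS x s t * P x t z * d s z

/-- Posterior expectation `E[d(S,z)|x,t]`. -/
noncomputable def condExpD {X S T Z : Type} [Fintype S]
    (pS : S → ℝ) (pTXS : X → S → T → ℝ) (d : S → Z → ℝ) (x : X) (t : T) (z : Z) : ℝ :=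
  ∑ s, (pS s * pTXS x s t / ∑ s', pS s' * pTXS x s' t) * d s z

/-- The Gibbs-type update `P(Q)`. -/
noncomputable def updP {X S T Z : Type} [Fintype S] [Fintype Z]
    (μ : ℝ) (pS : S → ℝ) (pTXS : X → S → T → ℝ) (d : S → Z → ℝ)
    (Q : X → Z → ℝ) (x : X) (t : T) (z : Z) : ℝ :=
  Q x z * Real.exp (μ * condExpD pS pTXS d x t z) /
    ∑ a, Q x a * Real.exp (μ * condExpD pS pTXS d x t a)

/-- The marginal update `Q(P)`. -/
noncomputable def updQ {X S T Z : Type} [Fintype S] [Fintype T]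
    (pS : S → ℝ) (pTXS : X → S → T → ℝ) (P : X → T → Z → ℝ) (x : X) (z : Z) : ℝ :=
  ∑ t, ∑ s, pS s * pTXS x s t * P x t z

/-- Conditional KL divergence `D(Q ∥ Q' | P_X)`. -/
noncomputable def condKLQ {X Z : Type} [Fintype X] [Fintype Z]
    (pX : X → ℝ) (Q Q' : X → Z → ℝ) : ℝ :=
  ∑ x, pX x * ∑ z, Q x z * Real.log (Q x z / Q' x z)

/-! Fix a letter `x` and put `c t z = μ E[d(S,z) | x, t]`. The Gibbs update `P' = P(Q)` makes
`log (P' / Q) - c = -log Λ_t` (`Λ_t` its normaliser) constant in `z`; hence for every stochastic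
`P` with `Q⋆ = Q(P)`
`F(P', Q) - F(P, Q⋆) = D(Q⋆ ∥ Q) - ∑_t P_{T|X}(t) D(P_t ∥ P'_t) ≤ D(Q⋆ ∥ Q) - D(Q⋆ ∥ Q(P'))`,
the inequality being joint convexity of `D` (the log-sum inequality). Along the iteration the gaps
`F(P^{(k+1)}, Q^{(k)}) - F(P⋆, Q⋆)` are therefore bounded by a telescoping sequence, and since
`D(Q⋆ ∥ Q^{(k)}) ≥ 0` for `k ≥ 1` (both are probability vectors) their partial sums are bounded. -/

open Real in
theorem sub_mul_le_mul_log_div_sub_mul_log {a b r : ℝ} (ha : 0 ≤ a) (hb : 0 ≤ b)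
    (hab : b = 0 → a = 0) (hr : 0 < r) : a - b * r ≤ a * log (a / b) - a * log r := by
  rcases ha.eq_or_lt with rfl | ha
  · simpa using mul_nonneg hb hr.le
  have hb : 0 < b := hb.lt_of_ne fun h => ha.ne' (hab h.symm)
  calc a - b * r = -(a * (b * r / a - 1)) := by field_simp; ring
    _ ≤ -(a * log (b * r / a)) := by
        gcongr
        exact log_le_sub_one_of_pos (by positivity)
    _ = a * log (a / b) - a * log r := by
        rw [log_div (by positivity) ha.ne', log_mul hb.ne' hr.ne', log_div ha.ne' hb.ne']
        ring

open Real in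
theorem sum_mul_log_sum_div_sum_le {ι : Type*} [Fintype ι] {a b : ι → ℝ}
    (ha : ∀ i, 0 ≤ a i) (hb : ∀ i, 0 ≤ b i) (hab : ∀ i, b i = 0 → a i = 0) :
    (∑ i, a i) * log ((∑ i, a i) / ∑ i, b i) ≤ ∑ i, a i * log (a i / b i) := by
  rcases (sum_nonneg fun i _ => ha i).eq_or_lt with hA | hA
  · have hzero : ∀ i, a i = 0 := fun i =>
      (sum_eq_zero_iff_of_nonneg fun i _ => ha i).1 hA.symm i (mem_univ i)
    simp [hzero]
  have hB : 0 < ∑ i, b i := by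
    refine (sum_nonneg fun i _ => hb i).lt_of_ne fun hB => hA.ne' ?_
    have hzero := (sum_eq_zero_iff_of_nonneg fun i _ => hb i).1 hB.symm
    exact sum_eq_zero fun i hi => hab i (hzero i hi)
  have key := sum_le_sum fun i (_ : i ∈ univ) =>
    sub_mul_le_mul_log_div_sub_mul_log (ha i) (hb i) (hab i) (div_pos hA hB)
  rw [sum_sub_distrib, sum_sub_distrib, ← sum_mul, ← sum_mul,
    mul_div_cancel₀ _ hB.ne', sub_self] at key
  linarith

section SingleLetter

variable {T Z : Type*}

noncomputable def relEntropy [Fintype Z] (q q' : Z → ℝ) : ℝ :=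
  ∑ z, q z * Real.log (q z / q' z)

noncomputable def mixture [Fintype T] (m : T → ℝ) (P : T → Z → ℝ) (z : Z) : ℝ :=
  ∑ t, m t * P t z

noncomputable def gibbsKernel [Fintype Z] (Q : Z → ℝ) (c : T → Z → ℝ) (t : T) (z : Z) : ℝ :=
  Q z * Real.exp (c t z) / ∑ a, Q a * Real.exp (c t a)

noncomputable def baObjective [Fintype T] [Fintype Z] (m : T → ℝ) (c : T → Z → ℝ)
    (P : T → Z → ℝ) (Q : Z → ℝ) : ℝ :=
  ∑ t, m t * ∑ z, P t z * (Real.log (P t z / Q z) - c t z)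

theorem sum_sub_sum_le_relEntropy [Fintype Z] {q q' : Z → ℝ} (hq : ∀ z, 0 ≤ q z)
    (hq' : ∀ z, 0 ≤ q' z) (hqq' : ∀ z, q' z = 0 → q z = 0) :
    ∑ z, q z - ∑ z, q' z ≤ relEntropy q q' := by
  rw [← sum_sub_distrib]
  refine sum_le_sum fun z _ => ?_
  simpa using sub_mul_le_mul_log_div_sub_mul_log (hq z) (hq' z) (hqq' z) one_pos

theorem relEntropy_mixture_le [Fintype T] [Fintype Z] {m : T → ℝ} {P P' : T → Z → ℝ}
    (hm : ∀ t, 0 ≤ m t) (hP : ∀ t z, 0 ≤ P t z) (hP' : ∀ t z, 0 ≤ P' t z)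
    (hPP' : ∀ t z, P' t z = 0 → P t z = 0) :
    relEntropy (mixture m P) (mixture m P') ≤ ∑ t, m t * relEntropy (P t) (P' t) := by
  calc relEntropy (mixture m P) (mixture m P')
      ≤ ∑ z, ∑ t, m t * P t z * Real.log (m t * P t z / (m t * P' t z)) :=
        sum_le_sum fun z _ => sum_mul_log_sum_div_sum_le
          (fun t => mul_nonneg (hm t) (hP t z)) (fun t => mul_nonneg (hm t) (hP' t z)) fun t h => by
            rcases mul_eq_zero.1 h with h | h <;> simp [h, hPP' t z]
    _ = ∑ t, m t * relEntropy (P t) (P' t) := by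
        rw [sum_comm]
        refine sum_congr rfl fun t _ => ?_
        rw [relEntropy, mul_sum]
        refine sum_congr rfl fun z _ => ?_
        rcases eq_or_ne (m t) 0 with h | h
        · simp [h]
        · rw [mul_div_mul_left _ _ h, mul_assoc]

theorem sum_mixture [Fintype T] [Fintype Z] {m : T → ℝ} {P : T → Z → ℝ}
    (hP : ∀ t, ∑ z, P t z = 1) : ∑ z, mixture m P z = ∑ t, m t := by
  simp only [mixture]
  rw [sum_comm]
  simp [← mul_sum, hP]

theorem mixture_nonneg [Fintype T] {m : T → ℝ} {P : T → Z → ℝ} (hm : ∀ t, 0 ≤ m t)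
    (hP : ∀ t z, 0 ≤ P t z) (z : Z) : 0 ≤ mixture m P z :=
  sum_nonneg fun t _ => mul_nonneg (hm t) (hP t z)

theorem mixture_pos [Fintype T] {m : T → ℝ} {P : T → Z → ℝ} (hm : ∀ t, 0 ≤ m t)
    (hm' : 0 < ∑ t, m t) (hP : ∀ t z, 0 < P t z) (z : Z) : 0 < mixture m P z := by
  obtain ⟨t, -, ht⟩ := exists_lt_of_sum_lt (f := fun _ => (0 : ℝ)) (by simpa using hm')
  exact sum_pos' (fun t _ => mul_nonneg (hm t) (hP t z).le)
    ⟨t, mem_univ t, mul_pos ht (hP t z)⟩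

theorem sum_exp_pos [Fintype Z] {Q : Z → ℝ} (hQ : ∀ z, 0 < Q z) (c : T → Z → ℝ) (t : T)
    (z : Z) : 0 < ∑ a, Q a * Real.exp (c t a) :=
  sum_pos (fun a _ => mul_pos (hQ a) (Real.exp_pos _)) ⟨z, mem_univ z⟩

theorem gibbsKernel_pos [Fintype Z] {Q : Z → ℝ} (hQ : ∀ z, 0 < Q z) (c : T → Z → ℝ) (t : T)
    (z : Z) : 0 < gibbsKernel Q c t z :=
  div_pos (mul_pos (hQ z) (Real.exp_pos _)) (sum_exp_pos hQ c t z)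

theorem sum_gibbsKernel [Fintype Z] [Nonempty Z] {Q : Z → ℝ} (hQ : ∀ z, 0 < Q z)
    (c : T → Z → ℝ) (t : T) : ∑ z, gibbsKernel Q c t z = 1 := by
  simp only [gibbsKernel, ← sum_div]
  exact div_self (sum_exp_pos hQ c t (Classical.arbitrary Z)).ne'

theorem baObjective_gibbsKernel [Fintype T] [Fintype Z] [Nonempty Z] {Q : Z → ℝ}
    (hQ : ∀ z, 0 < Q z) (m : T → ℝ) (c : T → Z → ℝ) :
    baObjective m c (gibbsKernel Q c) Q =
      -∑ t, m t * Real.log (∑ a, Q a * Real.exp (c t a)) := by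
  rw [baObjective, ← sum_neg_distrib]
  refine sum_congr rfl fun t _ => ?_
  have hterm : ∀ z, gibbsKernel Q c t z * (Real.log (gibbsKernel Q c t z / Q z) - c t z) =
      gibbsKernel Q c t z * -Real.log (∑ a, Q a * Real.exp (c t a)) := fun z => by
    rw [gibbsKernel, div_right_comm, mul_div_cancel_left₀ _ (hQ z).ne',
      Real.log_div (Real.exp_ne_zero _) (sum_exp_pos hQ c t z).ne', Real.log_exp]
    ring
  rw [sum_congr rfl fun z _ => hterm z, ← sum_mul, sum_gibbsKernel hQ, one_mul, mul_neg]

theorem baObjective_sub_baObjective_gibbsKernel [Fintype T] [Fintype Z] [Nonempty Z]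
    {m : T → ℝ} {P : T → Z → ℝ} {Q : Z → ℝ} (hm : ∀ t, 0 ≤ m t) (hP : ∀ t z, 0 ≤ P t z)
    (hPsum : ∀ t, ∑ z, P t z = 1) (hQ : ∀ z, 0 < Q z) (c : T → Z → ℝ) :
    baObjective m c P (mixture m P) - baObjective m c (gibbsKernel Q c) Q =
      ∑ t, m t * relEntropy (P t) (gibbsKernel Q c t) - relEntropy (mixture m P) Q := by
  have hmix : relEntropy (mixture m P) Q =
      ∑ t, m t * ∑ z, P t z * Real.log (mixture m P z / Q z) := by
    simp only [relEntropy, mul_sum]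
    rw [sum_comm]
    simp only [mixture, sum_mul, mul_assoc]
  have hlog : ∀ t, m t * Real.log (∑ a, Q a * Real.exp (c t a)) =
      m t * ∑ z, P t z * Real.log (∑ a, Q a * Real.exp (c t a)) := fun t => by
    rw [← sum_mul, hPsum, one_mul]
  rw [baObjective_gibbsKernel hQ, sub_neg_eq_add, hmix, sum_congr rfl fun t _ => hlog t,
    baObjective, ← sum_add_distrib, ← sum_sub_distrib]
  refine sum_congr rfl fun t _ => ?_
  rcases (hm t).eq_or_lt with hmt | hmt
  · simp [← hmt]
  rw [← mul_add, ← mul_sub, relEntropy, ← sum_add_distrib, ← sum_sub_distrib]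
  congr 1
  refine sum_congr rfl fun z _ => ?_
  rcases (hP t z).eq_or_lt with hPtz | hPtz
  · simp [← hPtz]
  have hmixz : 0 < mixture m P z := (mul_pos hmt hPtz).trans_le
    (single_le_sum (fun t _ => mul_nonneg (hm t) (hP t z)) (mem_univ t))
  have hΛ := sum_exp_pos hQ c t z
  have hQe : 0 < Q z * Real.exp (c t z) := mul_pos (hQ z) (Real.exp_pos _)
  rw [← mul_add, ← mul_sub, Real.log_div hPtz.ne' hmixz.ne',
    Real.log_div hmixz.ne' (hQ z).ne', gibbsKernel, Real.log_div hPtz.ne' (div_pos hQe hΛ).ne',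
    Real.log_div hQe.ne' hΛ.ne', Real.log_mul (hQ z).ne' (Real.exp_ne_zero _), Real.log_exp]
  ring

/-- The Csiszár–Tusnády five-point property, for one Blahut–Arimoto step. -/
theorem baObjective_gibbsKernel_sub_le [Fintype T] [Fintype Z] [Nonempty Z]
    {m : T → ℝ} {P : T → Z → ℝ} {Q : Z → ℝ} (hm : ∀ t, 0 ≤ m t) (hP : ∀ t z, 0 ≤ P t z)
    (hPsum : ∀ t, ∑ z, P t z = 1) (hQ : ∀ z, 0 < Q z) (c : T → Z → ℝ) :
    baObjective m c (gibbsKernel Q c) Q - baObjective m c P (mixture m P) ≤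
      relEntropy (mixture m P) Q - relEntropy (mixture m P) (mixture m (gibbsKernel Q c)) := by
  have hid := baObjective_sub_baObjective_gibbsKernel hm hP hPsum hQ c
  have hconv := relEntropy_mixture_le hm hP (fun t z => (gibbsKernel_pos hQ c t z).le)
    fun t z h => absurd h (gibbsKernel_pos hQ c t z).ne'
  linarith

section Model

variable {X S T Z : Type}

noncomputable def pTX [Fintype S] (pS : S → ℝ) (pTXS : X → S → T → ℝ) (x : X) (t : T) : ℝ :=
  ∑ s, pS s * pTXS x s t

theorem sum_mul_mul_eq_pTX_mul_condExpD [Fintype S] {pS : S → ℝ} {pTXS : X → S → T → ℝ}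
    (hpS : ∀ s, 0 ≤ pS s) (hpTXS : ∀ x s t, 0 ≤ pTXS x s t) (d : S → Z → ℝ) (x : X) (t : T)
    (z : Z) : ∑ s, pS s * pTXS x s t * d s z = pTX pS pTXS x t * condExpD pS pTXS d x t z := by
  have hcond : condExpD pS pTXS d x t z =
      (∑ s, pS s * pTXS x s t * d s z) / pTX pS pTXS x t := by
    simp only [condExpD, div_mul_eq_mul_div, ← sum_div, pTX]
  rw [hcond]
  rcases eq_or_ne (pTX pS pTXS x t) 0 with h | h
  · have hw := (sum_eq_zero_iff_of_nonneg fun s _ => mul_nonneg (hpS s) (hpTXS x s t)).1 h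
    simp [h, hw]
  · rw [mul_div_cancel₀ _ h]

theorem Fmu_eq_sum_baObjective [Fintype X] [Fintype S] [Fintype T] [Fintype Z]
    {pS : S → ℝ} {pTXS : X → S → T → ℝ} (hpS : ∀ s, 0 ≤ pS s)
    (hpTXS : ∀ x s t, 0 ≤ pTXS x s t) (μ : ℝ) (pX : X → ℝ)
    (d : S → Z → ℝ) (P : X → T → Z → ℝ) (Q : X → Z → ℝ) :
    Fmu μ pX pS pTXS d P Q = ∑ x, pX x *
      baObjective (pTX pS pTXS x) (fun t z => μ * condExpD pS pTXS d x t z) (P x) (Q x) := by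
  have hdist : ∀ x, ∑ s, ∑ t, ∑ z, pX x * pS s * pTXS x s t * P x t z * d s z =
      ∑ t, ∑ z, pX x * pTX pS pTXS x t * (P x t z * condExpD pS pTXS d x t z) := fun x => by
    rw [sum_comm]
    refine sum_congr rfl fun t _ => ?_
    rw [sum_comm]
    refine sum_congr rfl fun z _ => ?_
    rw [show pX x * pTX pS pTXS x t * (P x t z * condExpD pS pTXS d x t z) =
        pX x * P x t z * (pTX pS pTXS x t * condExpD pS pTXS d x t z) by ring,
      ← sum_mul_mul_eq_pTX_mul_condExpD hpS hpTXS, mul_sum]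
    exact sum_congr rfl fun s _ => by ring
  have hpXT : pXT pX pS pTXS = fun x t => pX x * pTX pS pTXS x t := rfl
  simp only [Fmu, hpXT, hdist]
  simp only [baObjective, mul_sub, sum_sub_distrib, mul_sum, mul_assoc, mul_left_comm μ]

theorem condKLQ_eq_sum_relEntropy [Fintype X] [Fintype Z] (pX : X → ℝ)
    (Q Q' : X → Z → ℝ) : condKLQ pX Q Q' = ∑ x, pX x * relEntropy (Q x) (Q' x) :=
  rfl

theorem pTX_nonneg [Fintype S] {pS : S → ℝ} {pTXS : X → S → T → ℝ} (hpS : ∀ s, 0 ≤ pS s)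
    (hpTXS : ∀ x s t, 0 ≤ pTXS x s t) (x : X) (t : T) : 0 ≤ pTX pS pTXS x t :=
  sum_nonneg fun s _ => mul_nonneg (hpS s) (hpTXS x s t)

theorem sum_pTX [Fintype S] [Fintype T] {pS : S → ℝ} {pTXS : X → S → T → ℝ}
    (hpSsum : ∑ s, pS s = 1) (hpTXSsum : ∀ x s, ∑ t, pTXS x s t = 1) (x : X) :
    ∑ t, pTX pS pTXS x t = 1 := by
  simp only [pTX]
  rw [sum_comm]
  simp [← mul_sum, hpTXSsum, hpSsum]

theorem updQ_eq_mixture [Fintype S] [Fintype T] (pS : S → ℝ) (pTXS : X → S → T → ℝ)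
    (P : X → T → Z → ℝ) (x : X) : updQ pS pTXS P x = mixture (pTX pS pTXS x) (P x) := by
  ext z
  simp only [updQ, mixture, pTX, sum_mul]

theorem updP_eq_gibbsKernel [Fintype S] [Fintype Z] (μ : ℝ) (pS : S → ℝ)
    (pTXS : X → S → T → ℝ) (d : S → Z → ℝ) (Q : X → Z → ℝ) (x : X) :
    updP μ pS pTXS d Q x = gibbsKernel (Q x) fun t z => μ * condExpD pS pTXS d x t z :=
  rfl

theorem sum_updQ [Fintype S] [Fintype T] [Fintype Z] {pS : S → ℝ} {pTXS : X → S → T → ℝ}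
    (hpSsum : ∑ s, pS s = 1) (hpTXSsum : ∀ x s, ∑ t, pTXS x s t = 1) {P : X → T → Z → ℝ}
    (x : X) (hP : ∀ t, ∑ z, P x t z = 1) : ∑ z, updQ pS pTXS P x z = 1 := by
  rw [updQ_eq_mixture, sum_mixture hP, sum_pTX hpSsum hpTXSsum]

theorem updQ_updP_pos [Fintype S] [Fintype T] [Fintype Z] {pS : S → ℝ}
    {pTXS : X → S → T → ℝ} (hpS : ∀ s, 0 ≤ pS s) (hpTXS : ∀ x s t, 0 ≤ pTXS x s t)
    (hpSsum : ∑ s, pS s = 1) (hpTXSsum : ∀ x s, ∑ t, pTXS x s t = 1) (μ : ℝ)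
    (d : S → Z → ℝ) {Q : X → Z → ℝ} (hQ : ∀ x z, 0 < Q x z) (x : X) (z : Z) :
    0 < updQ pS pTXS (updP μ pS pTXS d Q) x z := by
  rw [updQ_eq_mixture, updP_eq_gibbsKernel]
  have hm : 0 < ∑ t, pTX pS pTXS x t := by rw [sum_pTX hpSsum hpTXSsum]; exact one_pos
  exact mixture_pos (pTX_nonneg hpS hpTXS x) hm (gibbsKernel_pos (hQ x) _) z

theorem condKLQ_updQ_updP_nonneg [Fintype X] [Fintype S] [Fintype T] [Fintype Z]
    {pS : S → ℝ} {pTXS : X → S → T → ℝ} (hpS : ∀ s, 0 ≤ pS s)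
    (hpTXS : ∀ x s t, 0 ≤ pTXS x s t) (hpSsum : ∑ s, pS s = 1)
    (hpTXSsum : ∀ x s, ∑ t, pTXS x s t = 1) {pX : X → ℝ} (hpX : ∀ x, 0 ≤ pX x) (μ : ℝ)
    (d : S → Z → ℝ) {P : X → T → Z → ℝ} (hP : ∀ x t z, 0 ≤ P x t z)
    (hPsum : ∀ x t, ∑ z, P x t z = 1) {Q : X → Z → ℝ} (hQ : ∀ x z, 0 < Q x z) :
    0 ≤ condKLQ pX (updQ pS pTXS P) (updQ pS pTXS (updP μ pS pTXS d Q)) := by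
  rw [condKLQ_eq_sum_relEntropy]
  refine sum_nonneg fun x _ => mul_nonneg (hpX x) ?_
  have hsum := sum_updQ hpSsum hpTXSsum x (hPsum x)
  have : Nonempty Z := univ_nonempty_iff.1 (nonempty_of_sum_ne_zero (hsum ▸ one_ne_zero))
  have hpos := updQ_updP_pos hpS hpTXS hpSsum hpTXSsum μ d hQ x
  have hsum' : ∑ z, updQ pS pTXS (updP μ pS pTXS d Q) x z = 1 :=
    sum_updQ hpSsum hpTXSsum x fun t => by
      rw [updP_eq_gibbsKernel]; exact sum_gibbsKernel (hQ x) _ t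
  have hq : ∀ z, 0 ≤ updQ pS pTXS P x z := fun z => by
    rw [updQ_eq_mixture]; exact mixture_nonneg (pTX_nonneg hpS hpTXS x) (hP x) z
  simpa only [hsum, hsum', sub_self] using
    sum_sub_sum_le_relEntropy hq (fun z => (hpos z).le) fun z h => absurd h (hpos z).ne'

theorem Fmu_updP_sub_Fmu_le [Fintype X] [Fintype S] [Fintype T] [Fintype Z]
    {pS : S → ℝ} {pTXS : X → S → T → ℝ} (hpS : ∀ s, 0 ≤ pS s)
    (hpTXS : ∀ x s t, 0 ≤ pTXS x s t) (hpSsum : ∑ s, pS s = 1)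
    (hpTXSsum : ∀ x s, ∑ t, pTXS x s t = 1) {pX : X → ℝ} (hpX : ∀ x, 0 ≤ pX x) (μ : ℝ)
    (d : S → Z → ℝ) {P : X → T → Z → ℝ} (hP : ∀ x t z, 0 ≤ P x t z)
    (hPsum : ∀ x t, ∑ z, P x t z = 1) {Q : X → Z → ℝ} (hQ : ∀ x z, 0 < Q x z) :
    Fmu μ pX pS pTXS d (updP μ pS pTXS d Q) Q - Fmu μ pX pS pTXS d P (updQ pS pTXS P) ≤
      condKLQ pX (updQ pS pTXS P) Q -
        condKLQ pX (updQ pS pTXS P) (updQ pS pTXS (updP μ pS pTXS d Q)) := by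
  rw [Fmu_eq_sum_baObjective hpS hpTXS, Fmu_eq_sum_baObjective hpS hpTXS,
    condKLQ_eq_sum_relEntropy, condKLQ_eq_sum_relEntropy,
    ← sum_sub_distrib, ← sum_sub_distrib]
  refine sum_le_sum fun x _ => ?_
  rw [← mul_sub, ← mul_sub]
  refine mul_le_mul_of_nonneg_left ?_ (hpX x)
  have : Nonempty Z := univ_nonempty_iff.1
    (nonempty_of_sum_ne_zero ((sum_updQ hpSsum hpTXSsum x (hPsum x)) ▸ one_ne_zero))
  simpa only [updQ_eq_mixture, updP_eq_gibbsKernel] using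
    baObjective_gibbsKernel_sub_le (pTX_nonneg hpS hpTXS x) (hP x) (hPsum x) (hQ x) _

end Model

theorem sum_Ico_le_sub_of_le_sub_succ {f D : ℕ → ℝ} (h : ∀ k, f k ≤ D k - D (k + 1))
    {M N : ℕ} (hMN : M ≤ N) : ∑ k ∈ Ico M N, f k ≤ D M - D N :=
  calc ∑ k ∈ Ico M N, f k ≤ ∑ k ∈ Ico M N, (D k - D (k + 1)) := sum_le_sum fun k _ => h k
    _ = D M - D N := by
        rw [← neg_sub (D N), ← sum_Ico_sub D hMN, ← sum_neg_distrib]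
        simp only [neg_sub]

theorem summable_of_le_sub_succ {f D : ℕ → ℝ} (hf : ∀ k, 0 ≤ f k)
    (h : ∀ k, f k ≤ D k - D (k + 1)) (hD : ∀ k, 0 ≤ D (k + 1)) : Summable f := by
  refine summable_of_sum_range_le (c := max (D 0) 0) hf fun n => ?_
  cases n with
  | zero => simp
  | succ n =>
    rw [range_eq_Ico]
    exact ((sum_Ico_le_sub_of_le_sub_succ h (Nat.zero_le _)).trans
      (sub_le_self _ (hD n))).trans (le_max_left _ _)

theorem stmt6_general {X S T Z : Type} [Fintype X] [Fintype S] [Fintype T] [Fintype Z]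
    (μ : ℝ)
    (pX : X → ℝ) (pS : S → ℝ) (pTXS : X → S → T → ℝ) (d : S → Z → ℝ)
    (hpX : ∀ x, 0 ≤ pX x)
    (hpS : ∀ s, 0 ≤ pS s) (hpSsum : ∑ s, pS s = 1)
    (hpTXS : ∀ x s t, 0 ≤ pTXS x s t) (hpTXSsum : ∀ x s, ∑ t, pTXS x s t = 1)
    (Qseq : ℕ → X → Z → ℝ) (Pseq : ℕ → X → T → Z → ℝ)
    (hQ0pos : ∀ x z, 0 < Qseq 0 x z)
    (hPrec : ∀ k, Pseq (k + 1) = updP μ pS pTXS d (Qseq k))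
    (hQrec : ∀ k, Qseq (k + 1) = updQ pS pTXS (Pseq (k + 1)))
    (Pstar : X → T → Z → ℝ) (Qstar : X → Z → ℝ)
    (hPstar : ∀ x t z, 0 ≤ Pstar x t z) (hPstarsum : ∀ x t, ∑ z, Pstar x t z = 1)
    (hQstar : Qstar = updQ pS pTXS Pstar)
    (hle : ∀ k, Fmu μ pX pS pTXS d Pstar Qstar ≤
      Fmu μ pX pS pTXS d (Pseq (k + 1)) (Qseq k)) :
    (∀ M N : ℕ, 1 ≤ M → M < N →
      0 ≤ ∑ k ∈ Finset.Ico M N,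
            (Fmu μ pX pS pTXS d (Pseq (k + 1)) (Qseq k) -
              Fmu μ pX pS pTXS d Pstar Qstar) ∧
      ∑ k ∈ Finset.Ico M N,
            (Fmu μ pX pS pTXS d (Pseq (k + 1)) (Qseq k) -
              Fmu μ pX pS pTXS d Pstar Qstar) ≤
        condKLQ pX Qstar (Qseq M) - condKLQ pX Qstar (Qseq N)) ∧
    Summable (fun k => Fmu μ pX pS pTXS d (Pseq (k + 1)) (Qseq k) -
      Fmu μ pX pS pTXS d Pstar Qstar) ∧
    Tendsto (fun k => Fmu μ pX pS pTXS d (Pseq (k + 1)) (Qseq k)) atTop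
      (nhds (Fmu μ pX pS pTXS d Pstar Qstar)) := by
  subst hQstar
  have hQpos : ∀ k x z, 0 < Qseq k x z := by
    intro k
    induction k with
    | zero => exact hQ0pos
    | succ k ih => rw [hQrec, hPrec]; exact updQ_updP_pos hpS hpTXS hpSsum hpTXSsum μ d ih
  have hgap : ∀ k, 0 ≤ Fmu μ pX pS pTXS d (Pseq (k + 1)) (Qseq k) -
      Fmu μ pX pS pTXS d Pstar (updQ pS pTXS Pstar) := fun k => sub_nonneg.2 (hle k)
  have hstep : ∀ k, Fmu μ pX pS pTXS d (Pseq (k + 1)) (Qseq k) -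
      Fmu μ pX pS pTXS d Pstar (updQ pS pTXS Pstar) ≤
        condKLQ pX (updQ pS pTXS Pstar) (Qseq k) -
          condKLQ pX (updQ pS pTXS Pstar) (Qseq (k + 1)) := fun k => by
    rw [hQrec k, hPrec k]
    exact Fmu_updP_sub_Fmu_le hpS hpTXS hpSsum hpTXSsum hpX μ d hPstar hPstarsum (hQpos k)
  have hKL : ∀ k, 0 ≤ condKLQ pX (updQ pS pTXS Pstar) (Qseq (k + 1)) := fun k => by
    rw [hQrec k, hPrec k]
    exact condKLQ_updQ_updP_nonneg hpS hpTXS hpSsum hpTXSsum hpX μ d hPstar hPstarsum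
      (hQpos k)
  have hsum := summable_of_le_sub_succ hgap hstep hKL
  refine ⟨fun M N _ hMN => ⟨sum_nonneg fun k _ => hgap k,
    sum_Ico_le_sub_of_le_sub_succ hstep hMN.le⟩, hsum, ?_⟩
  simpa using
    hsum.tendsto_atTop_zero.add_const (Fmu μ pX pS pTXS d Pstar (updQ pS pTXS Pstar))

/-- telescoping consequence of the BA identity: if
`F_μ(P⋆, Q⋆) ≤ F_μ(P^{(k+1)}, Q^{(k)})` for all `k` (with `Q⋆ = Q(P⋆)`), then for all
`N > M ≥ 1` the partial sums `Σ_{k=M}^{N−1}[F_μ(P^{(k+1)}, Q^{(k)}) − F_μ(P⋆, Q⋆)]` are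
nonnegative and bounded by `D(Q⋆ ∥ Q^{(M)} | P_X) − D(Q⋆ ∥ Q^{(N)} | P_X)`; hence the series
converges and `F_μ(P^{(k+1)}, Q^{(k)}) → F_μ(P⋆, Q⋆)`. -/
theorem stmt6 {X S T Z : Type} [Fintype X] [Fintype S] [Fintype T] [Fintype Z]
    (μ : ℝ) (hμ : μ ≤ 0)
    (pX : X → ℝ) (pS : S → ℝ) (pTXS : X → S → T → ℝ) (d : S → Z → ℝ)
    (hpX : ∀ x, 0 ≤ pX x) (hpXsum : ∑ x, pX x = 1)
    (hpS : ∀ s, 0 ≤ pS s) (hpSsum : ∑ s, pS s = 1)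
    (hpTXS : ∀ x s t, 0 ≤ pTXS x s t) (hpTXSsum : ∀ x s, ∑ t, pTXS x s t = 1)
    (hd : ∀ s z, 0 ≤ d s z)
    (Qseq : ℕ → X → Z → ℝ) (Pseq : ℕ → X → T → Z → ℝ)
    (hQ0pos : ∀ x z, 0 < Qseq 0 x z) (hQ0sum : ∀ x, ∑ z, Qseq 0 x z = 1)
    (hPrec : ∀ k, Pseq (k + 1) = updP μ pS pTXS d (Qseq k))
    (hQrec : ∀ k, Qseq (k + 1) = updQ pS pTXS (Pseq (k + 1)))
    (Pstar : X → T → Z → ℝ) (Qstar : X → Z → ℝ)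
    (hPstar : ∀ x t z, 0 ≤ Pstar x t z) (hPstarsum : ∀ x t, ∑ z, Pstar x t z = 1)
    (hQstar : Qstar = updQ pS pTXS Pstar)
    (hle : ∀ k, Fmu μ pX pS pTXS d Pstar Qstar ≤
      Fmu μ pX pS pTXS d (Pseq (k + 1)) (Qseq k)) :
    (∀ M N : ℕ, 1 ≤ M → M < N →
      0 ≤ ∑ k ∈ Finset.Ico M N,
            (Fmu μ pX pS pTXS d (Pseq (k + 1)) (Qseq k) -
              Fmu μ pX pS pTXS d Pstar Qstar) ∧
      ∑ k ∈ Finset.Ico M N,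
            (Fmu μ pX pS pTXS d (Pseq (k + 1)) (Qseq k) -
              Fmu μ pX pS pTXS d Pstar Qstar) ≤
        condKLQ pX Qstar (Qseq M) - condKLQ pX Qstar (Qseq N)) ∧
    Summable (fun k => Fmu μ pX pS pTXS d (Pseq (k + 1)) (Qseq k) -
      Fmu μ pX pS pTXS d Pstar Qstar) ∧
    Tendsto (fun k => Fmu μ pX pS pTXS d (Pseq (k + 1)) (Qseq k)) atTop
      (nhds (Fmu μ pX pS pTXS d Pstar Qstar)) :=
  stmt6_general μ pX pS pTXS d hpX hpS hpSsum hpTXS hpTXSsum Qseq Pseq hQ0pos hPrec hQrec Pstar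
    Qstar hPstar hPstarsum hQstar hle
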